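/- arXiv:2512.05286 — 5 statements merged into one kernel-verified Lean document; each statement's English description precedes it below -/
import Mathlib

section
/- For any matrix A of rank r with singular values σ₁ ≥ ... ≥ σ_r and truncated SVD A_k, the Frobenius norm error satisfies ‖A − A_k‖_F = (Σ_{j=k+1}^r σ_j²)^{1/2}, and this is minimal among all matrices of rank at most k (Eckart–Young theorem, Frobenius norm case). -/
/-!
Let `P` be the orthogonal projection onto the column space of `B`; its trace is `rank B ≤ k`.
Since `(1 - P) B = 0`, Pythagoras gives `‖A - B‖² ≥ ‖(1 - P) A‖² = ‖A‖² - ‖P A‖²`, and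
`‖P A‖² = ∑ σᵢ² tᵢ` with `tᵢ = ‖P uᵢ‖² ∈ [0, 1]` and `∑ tᵢ ≤ tr P ≤ k`. For decreasing weights
`σᵢ²` such a sum is at most `σ₁² + ⋯ + σₖ²`, so `‖A - B‖² ≥ σₖ₊₁² + ⋯ + σᵣ² = ‖A - Aₖ‖²`.
-/

open Matrix

noncomputable def frobNorm {m n : ℕ} (A : Matrix (Fin m) (Fin n) ℂ) : ℝ :=
  Real.sqrt (∑ i, ∑ j, ‖A i j‖ ^ 2)

open RCLike
open scoped ComplexOrder

-- Each term is compared with the threshold `c = w k`; the comparison costs `c (∑ t - k) ≤ 0`.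
theorem sum_mul_le_sum_of_antitone {r k : ℕ} {w t : Fin r → ℝ} (hw : Antitone w) (hw0 : 0 ≤ w)
    (ht0 : 0 ≤ t) (ht1 : t ≤ 1) (hts : ∑ i, t i ≤ k) :
    ∑ i, w i * t i ≤ ∑ i, if i.val < k then w i else 0 := by
  rcases le_or_gt r k with hrk | hkr
  · refine Finset.sum_le_sum fun i _ => ?_
    rw [if_pos (i.isLt.trans_le hrk)]
    exact mul_le_of_le_one_right (hw0 i) (ht1 i)
  set c := w ⟨k, hkr⟩
  have key : ∀ i, w i * t i - (if i.val < k then w i else 0) ≤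
      c * (t i - if i.val < k then 1 else 0) := by
    intro i
    split_ifs with hik
    · have : c ≤ w i := hw (Fin.le_def.mpr hik.le)
      nlinarith [mul_nonneg (sub_nonneg.mpr this) (sub_nonneg.mpr (show t i ≤ 1 from ht1 i))]
    · have : w i ≤ c := hw (Fin.le_def.mpr (not_lt.mp hik))
      nlinarith [mul_nonneg (sub_nonneg.mpr this) (show 0 ≤ t i from ht0 i)]
  have hcard : ∑ i : Fin r, (if i.val < k then (1 : ℝ) else 0) = k := by
    rw [Finset.sum_boole]; simp [Fin.card_filter_val_lt, hkr.le]
  have hsum := Finset.sum_le_sum fun i (_ : i ∈ Finset.univ) => key i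
  rw [Finset.sum_sub_distrib, ← Finset.mul_sum, Finset.sum_sub_distrib, hcard] at hsum
  nlinarith [mul_nonpos_of_nonneg_of_nonpos (hw0 ⟨k, hkr⟩) (sub_nonpos.mpr hts)]

section

variable {𝕜 : Type*} [RCLike 𝕜] {l l' m n : Type*} [Fintype m]

namespace IsStarProjection

variable {P : Matrix m m 𝕜}

theorem isHermitian (hP : IsStarProjection P) : P.IsHermitian :=
  hP.isSelfAdjoint

theorem conjTranspose_mul_self_mul (hP : IsStarProjection P) (A : Matrix m n 𝕜) :
    (P * A)ᴴ * (P * A) = Aᴴ * P * A := by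
  rw [conjTranspose_mul, hP.isHermitian.eq, Matrix.mul_assoc, ← Matrix.mul_assoc P,
    hP.isIdempotentElem.eq, Matrix.mul_assoc]

theorem posSemidef (hP : IsStarProjection P) : P.PosSemidef := by
  simpa [hP.isHermitian.eq, hP.isIdempotentElem.eq] using posSemidef_conjTranspose_mul_self P

end IsStarProjection

theorem isStarProjection_mul_conjTranspose [Fintype l] [DecidableEq l] {U : Matrix m l 𝕜}
    (hU : Uᴴ * U = 1) : IsStarProjection (U * Uᴴ) where
  isIdempotentElem := by
    rw [IsIdempotentElem, Matrix.mul_assoc, ← Matrix.mul_assoc Uᴴ, hU, Matrix.one_mul]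
  isSelfAdjoint := by
    rw [IsSelfAdjoint, star_eq_conjTranspose, conjTranspose_mul, conjTranspose_conjTranspose]

-- `P` is the spectral projection of `H` onto the eigenvectors with nonzero eigenvalue.
theorem Matrix.IsHermitian.exists_isStarProjection_mul_eq_self [DecidableEq m] {H : Matrix m m 𝕜}
    (hH : H.IsHermitian) :
    ∃ P : Matrix m m 𝕜, IsStarProjection P ∧ P * H = H ∧ P.trace = H.rank := by
  set E := hH.eigenvectorUnitary
  set d : m → 𝕜 := fun i => if hH.eigenvalues i = 0 then 0 else 1
  have hd : IsStarProjection (diagonal d) := by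
    constructor
    · simp [d, IsIdempotentElem, diagonal_mul_diagonal]
    · simp [d, IsSelfAdjoint, star_eq_conjTranspose, diagonal_conjTranspose]
  have hdH : diagonal d * diagonal (RCLike.ofReal ∘ hH.eigenvalues) =
      diagonal (RCLike.ofReal ∘ hH.eigenvalues) := by
    rw [diagonal_mul_diagonal]
    congr 1; funext i
    by_cases h : hH.eigenvalues i = 0 <;> simp [d, h]
  refine ⟨Unitary.conjStarAlgAut 𝕜 _ E (diagonal d), hd.map _, ?_, ?_⟩
  · calc _ = Unitary.conjStarAlgAut 𝕜 _ E (diagonal d) *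
            Unitary.conjStarAlgAut 𝕜 _ E (diagonal (RCLike.ofReal ∘ hH.eigenvalues)) :=
          congrArg _ hH.spectral_theorem
      _ = H := by rw [← map_mul, hdH, ← hH.spectral_theorem]
  · rw [Unitary.conjStarAlgAut_apply, trace_mul_cycle, Unitary.coe_star_mul_self, Matrix.one_mul,
      hH.rank_eq_card_non_zero_eigs]
    simp only [d, trace_diagonal]
    rw [Fintype.card_subtype, Finset.sum_ite]
    simp

variable [Fintype n]

theorem exists_isStarProjection_mul_eq_self [DecidableEq m] (B : Matrix m n 𝕜) :
    ∃ P : Matrix m m 𝕜, IsStarProjection P ∧ P * B = B ∧ P.trace = B.rank := by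
  obtain ⟨P, hP, hPH, htr⟩ :=
    (isHermitian_mul_conjTranspose_self B).exists_isStarProjection_mul_eq_self
  refine ⟨P, hP, ?_, htr.trans (by rw [rank_self_mul_conjTranspose])⟩
  have h : (P - 1) * (B * Bᴴ) = 0 := by rw [Matrix.sub_mul, hPH, Matrix.one_mul, sub_self]
  rwa [mul_self_mul_conjTranspose_eq_zero, Matrix.sub_mul, Matrix.one_mul, sub_eq_zero] at h

noncomputable def frobSq (A : Matrix m n 𝕜) : ℝ := ∑ i, ∑ j, ‖A i j‖ ^ 2

theorem frobSq_nonneg (A : Matrix m n 𝕜) : 0 ≤ frobSq A := by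
  unfold frobSq; positivity

theorem re_trace_conjTranspose_mul_self (A : Matrix m n 𝕜) : re (Aᴴ * A).trace = frobSq A := by
  simp only [trace, diag, mul_apply, conjTranspose_apply, map_sum, frobSq, RCLike.star_def,
    RCLike.conj_mul]
  rw [Finset.sum_comm]
  norm_cast

theorem frobSq_diagonal [DecidableEq n] (d : n → 𝕜) : frobSq (diagonal d) = ∑ i, ‖d i‖ ^ 2 := by
  simp [frobSq, diagonal_apply, apply_ite]

theorem frobSq_mul_mul_conjTranspose [Fintype l] [Fintype l'] [DecidableEq l] [DecidableEq l']
    {U : Matrix m l 𝕜} {V : Matrix n l' 𝕜} (hU : Uᴴ * U = 1) (hV : Vᴴ * V = 1)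
    (X : Matrix l l' 𝕜) : frobSq (U * X * Vᴴ) = frobSq X := by
  rw [← re_trace_conjTranspose_mul_self, ← re_trace_conjTranspose_mul_self]
  congr 1
  calc ((U * X * Vᴴ)ᴴ * (U * X * Vᴴ)).trace = (V * (Xᴴ * (Uᴴ * U) * X) * Vᴴ).trace := by
        simp only [conjTranspose_mul, conjTranspose_conjTranspose, Matrix.mul_assoc]
    _ = (Xᴴ * X).trace := by
        rw [hU, Matrix.mul_one, trace_mul_cycle, hV, Matrix.one_mul]

namespace IsStarProjection

variable {P : Matrix m m 𝕜}

theorem frobSq_eq_add [DecidableEq m] (hP : IsStarProjection P) (A : Matrix m n 𝕜) :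
    frobSq A = frobSq (P * A) + frobSq ((1 - P) * A) := by
  simp_rw [← re_trace_conjTranspose_mul_self, hP.conjTranspose_mul_self_mul,
    IsStarProjection.conjTranspose_mul_self_mul hP.one_sub, ← map_add, ← trace_add,
    ← Matrix.add_mul, ← Matrix.mul_add, add_sub_cancel, Matrix.mul_one]

theorem re_diag_conjTranspose_mul_mul_nonneg [Fintype l] (hP : IsStarProjection P)
    (U : Matrix m l 𝕜) (i : l) : 0 ≤ re ((Uᴴ * P * U) i i) :=
  (nonneg_iff.mp (hP.posSemidef.conjTranspose_mul_mul_same U).diag_nonneg).1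

theorem re_diag_conjTranspose_mul_mul_le_one [Fintype l] [DecidableEq l] [DecidableEq m]
    (hP : IsStarProjection P) {U : Matrix m l 𝕜} (hU : Uᴴ * U = 1) (i : l) :
    re ((Uᴴ * P * U) i i) ≤ 1 := by
  have h := re_diag_conjTranspose_mul_mul_nonneg (IsStarProjection.one_sub hP) U i
  rw [Matrix.mul_sub, Matrix.sub_mul, Matrix.mul_one, hU] at h
  simpa using h

theorem sum_re_diag_conjTranspose_mul_mul_le [Fintype l] [DecidableEq l] [DecidableEq m]
    (hP : IsStarProjection P) {U : Matrix m l 𝕜} (hU : Uᴴ * U = 1) :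
    ∑ i, re ((Uᴴ * P * U) i i) ≤ re P.trace := by
  have hQ := (isStarProjection_mul_conjTranspose hU).one_sub
  have h := (nonneg_iff.mp (hQ.posSemidef.conjTranspose_mul_mul_same P).trace_nonneg).1
  rw [hP.isHermitian.eq, Matrix.mul_sub, Matrix.sub_mul, Matrix.mul_one, hP.isIdempotentElem.eq,
    trace_sub, map_sub, sub_nonneg] at h
  calc ∑ i, re ((Uᴴ * P * U) i i) = re ((Uᴴ * P) * (P * U)).trace := by
        rw [← map_sum, ← Matrix.mul_assoc, Matrix.mul_assoc Uᴴ P P, hP.isIdempotentElem.eq]; rfl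
    _ = re (P * (U * Uᴴ) * P).trace := by rw [trace_mul_comm]; simp only [Matrix.mul_assoc]
    _ ≤ re P.trace := h

theorem frobSq_mul_mul_diagonal_mul [Fintype l] [DecidableEq l] (hP : IsStarProjection P)
    (U : Matrix m l 𝕜) {V : Matrix n l 𝕜} (hV : Vᴴ * V = 1) (σ : l → ℝ) :
    frobSq (P * (U * diagonal (fun i => (σ i : 𝕜)) * Vᴴ)) =
      ∑ i, σ i ^ 2 * re ((Uᴴ * P * U) i i) := by
  set D : Matrix l l 𝕜 := diagonal fun i => (σ i : 𝕜)
  have hD : Dᴴ = D := by simp [D, diagonal_conjTranspose]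
  rw [← re_trace_conjTranspose_mul_self, hP.conjTranspose_mul_self_mul]
  calc re ((U * D * Vᴴ)ᴴ * P * (U * D * Vᴴ)).trace
      = re (V * (D * (Uᴴ * P * U) * D) * Vᴴ).trace := by
        simp only [conjTranspose_mul, conjTranspose_conjTranspose, hD, Matrix.mul_assoc]
    _ = re ((Uᴴ * P * U) * (D * D)).trace := by
        rw [trace_mul_cycle, hV, Matrix.one_mul, trace_mul_cycle, trace_mul_comm]
    _ = ∑ i, σ i ^ 2 * re ((Uᴴ * P * U) i i) := by
        simp [D, trace, diagonal_mul_diagonal, mul_diagonal, mul_comm, sq]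

theorem frobSq_sub_frobSq_mul_le [DecidableEq m] (hP : IsStarProjection P) {B : Matrix m n 𝕜}
    (hPB : P * B = B) (A : Matrix m n 𝕜) : frobSq A - frobSq (P * A) ≤ frobSq (A - B) := by
  have h := hP.frobSq_eq_add (A - B)
  rw [Matrix.mul_sub (1 - P), Matrix.sub_mul 1 P B, Matrix.one_mul, hPB, sub_self, sub_zero] at h
  linarith [hP.frobSq_eq_add A, frobSq_nonneg (P * (A - B))]

theorem frobSq_mul_le_sum_sq [DecidableEq m] {r k : ℕ} (hP : IsStarProjection P)
    (hPk : re P.trace ≤ k) {U : Matrix m (Fin r) 𝕜} {V : Matrix n (Fin r) 𝕜} (hU : Uᴴ * U = 1)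
    (hV : Vᴴ * V = 1) {σ : Fin r → ℝ} (hσ0 : 0 ≤ σ) (hσ : Antitone σ) :
    frobSq (P * (U * diagonal (fun i => (σ i : 𝕜)) * Vᴴ)) ≤
      ∑ i, if i.val < k then σ i ^ 2 else 0 := by
  rw [hP.frobSq_mul_mul_diagonal_mul U hV]
  exact sum_mul_le_sum_of_antitone (fun i j hij => pow_le_pow_left₀ (hσ0 j) (hσ hij) 2)
    (fun i => sq_nonneg _) (hP.re_diag_conjTranspose_mul_mul_nonneg U)
    (hP.re_diag_conjTranspose_mul_mul_le_one hU)
    ((hP.sum_re_diag_conjTranspose_mul_mul_le hU).trans hPk)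

end IsStarProjection

end

theorem frobNorm_eq_sqrt_frobSq {m n : ℕ} (A : Matrix (Fin m) (Fin n) ℂ) :
    frobNorm A = √(frobSq A) :=
  rfl

theorem eckart_young_frobenius_general {m n r k : ℕ}
    (A Ak : Matrix (Fin m) (Fin n) ℂ)
    (U : Matrix (Fin m) (Fin r) ℂ) (V : Matrix (Fin n) (Fin r) ℂ)
    (σ : Fin r → ℝ)
    (hU : Uᴴ * U = 1) (hV : Vᴴ * V = 1)
    (hσpos : ∀ i, 0 < σ i)
    (hσmono : ∀ i j : Fin r, i ≤ j → σ j ≤ σ i)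
    (hA : A = U * Matrix.diagonal (fun i => (σ i : ℂ)) * Vᴴ)
    (hAk : Ak = U * Matrix.diagonal (fun i : Fin r => if i.val < k then (σ i : ℂ) else 0) * Vᴴ) :
    frobNorm (A - Ak) = Real.sqrt (∑ j : Fin r, if k ≤ j.val then σ j ^ 2 else 0) ∧
      ∀ B : Matrix (Fin m) (Fin n) ℂ, B.rank ≤ k →
        frobNorm (A - Ak) ≤ frobNorm (A - B) := by
  have hAAk : A - Ak = U * diagonal (fun i => if i.val < k then 0 else (σ i : ℂ)) * Vᴴ := by
    rw [hA, hAk, ← Matrix.sub_mul, ← Matrix.mul_sub, diagonal_sub]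
    congr; funext i; split_ifs <;> simp
  have htail : frobSq (A - Ak) = ∑ i : Fin r, if k ≤ i.val then σ i ^ 2 else 0 := by
    rw [hAAk, frobSq_mul_mul_conjTranspose hU hV, frobSq_diagonal]
    refine Finset.sum_congr rfl fun i _ => ?_
    split_ifs <;> first | omega | simp
  have hhead : frobSq A - (∑ i : Fin r, if i.val < k then σ i ^ 2 else 0) = frobSq (A - Ak) := by
    rw [htail, hA, frobSq_mul_mul_conjTranspose hU hV, frobSq_diagonal, sub_eq_iff_eq_add,
      ← Finset.sum_add_distrib]
    refine Finset.sum_congr rfl fun i _ => ?_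
    split_ifs <;> first | omega | simp
  refine ⟨by rw [frobNorm_eq_sqrt_frobSq, htail], fun B hB => ?_⟩
  obtain ⟨P, hP, hPB, htr⟩ := exists_isStarProjection_mul_eq_self B
  have hPA := hP.frobSq_mul_le_sum_sq (k := k) (by simpa [htr] using hB) hU hV
    (fun i => (hσpos i).le) hσmono
  rw [RCLike.ofReal_eq_complex_ofReal, ← hA] at hPA
  rw [frobNorm_eq_sqrt_frobSq, frobNorm_eq_sqrt_frobSq]
  exact Real.sqrt_le_sqrt (by linarith [hP.frobSq_sub_frobSq_mul_le hPB A])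

/-- Eckart–Young theorem, Frobenius norm case. -/
theorem eckart_young_frobenius {m n r k : ℕ}
    (A Ak : Matrix (Fin m) (Fin n) ℂ)
    (U : Matrix (Fin m) (Fin r) ℂ) (V : Matrix (Fin n) (Fin r) ℂ)
    (σ : Fin r → ℝ)
    (hU : Uᴴ * U = 1) (hV : Vᴴ * V = 1)
    (hσpos : ∀ i, 0 < σ i)
    (hσmono : ∀ i j : Fin r, i ≤ j → σ j ≤ σ i)
    (hA : A = U * Matrix.diagonal (fun i => (σ i : ℂ)) * Vᴴ)
    (hrank : A.rank = r)
    (hAk : Ak = U * Matrix.diagonal (fun i : Fin r => if i.val < k then (σ i : ℂ) else 0) * Vᴴ) :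
    frobNorm (A - Ak) = Real.sqrt (∑ j : Fin r, if k ≤ j.val then σ j ^ 2 else 0) ∧
      ∀ B : Matrix (Fin m) (Fin n) ℂ, B.rank ≤ k →
        frobNorm (A - Ak) ≤ frobNorm (A - B) :=
  eckart_young_frobenius_general A Ak U V σ hU hV hσpos hσmono hA hAk
end

section
/- Let A ∈ ℂ^{m×n}, let C = A(:,J) consist of k linearly independent columns and R = A(I,:) consist of k linearly independent rows, and suppose rank(A) = k. Then A = C U R with U = C† A R†, where † denotes the Moore–Penrose pseudoinverse. -/
/-!
The columns of C = A(:,J) lie in the column space of A and span a subspace of the same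
dimension k = rank A, so they span all of it and A = C X for some X; dually A = Y R.
The Penrose condition C C† C = C gives C C† A = C C† C X = A, and
likewise A R† R = A. Hence C (C† A R†) R = (C C† A) R† R = A R† R = A.
-/

open Matrix Submodule

/-- B is the Moore–Penrose pseudoinverse of A (the four Penrose conditions). -/
def IsMoorePenrose {m n : ℕ} (A : Matrix (Fin m) (Fin n) ℂ)
    (B : Matrix (Fin n) (Fin m) ℂ) : Prop :=
  A * B * A = A ∧ B * A * B = B ∧ (A * B)ᴴ = A * B ∧ (B * A)ᴴ = B * A

namespace Matrix

variable {R : Type*} {m n k : Type*}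

theorem exists_eq_mul_of_span_cols_le [CommSemiring R] [Fintype k]
    {A : Matrix m n R} {C : Matrix m k R}
    (h : span R (Set.range A.col) ≤ span R (Set.range C.col)) :
    ∃ X : Matrix k n R, A = C * X := by
  have hcol (j : n) : ∃ c : k → R, ∑ i, c i • C.col i = A.col j :=
    (mem_span_range_iff_exists_fun R).1 (h (subset_span ⟨j, rfl⟩))
  choose c hc using hcol
  refine ⟨of fun i j => c j i, ext fun r j => ?_⟩
  simpa [mul_apply, mul_comm] using (congrFun (hc j) r).symm

theorem span_cols_submatrix_eq_of_rank_eq [Field R] [Fintype m] [Fintype n] [Fintype k]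
    (A : Matrix m n R) (J : k → n) (h : (A.submatrix id J).rank = A.rank) :
    span R (Set.range (A.submatrix id J).col) = span R (Set.range A.col) := by
  refine eq_of_le_of_finrank_eq (span_mono (Set.range_subset_iff.2 fun j => ⟨J j, rfl⟩)) ?_
  rwa [← rank_eq_finrank_span_cols, ← rank_eq_finrank_span_cols]

theorem exists_eq_submatrix_col_mul_of_rank_eq [Field R] [Fintype m] [Fintype n] [Fintype k]
    (A : Matrix m n R) (J : k → n) (h : (A.submatrix id J).rank = A.rank) :
    ∃ X : Matrix k n R, A = A.submatrix id J * X :=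
  exists_eq_mul_of_span_cols_le (span_cols_submatrix_eq_of_rank_eq A J h).ge

theorem exists_eq_mul_submatrix_row_of_rank_eq [Field R] [Fintype m] [Fintype n] [Fintype k]
    (A : Matrix m n R) (I : k → m) (h : (A.submatrix I id).rank = A.rank) :
    ∃ Y : Matrix m k R, A = Y * A.submatrix I id := by
  obtain ⟨X, hX⟩ := exists_eq_submatrix_col_mul_of_rank_eq Aᵀ I
    (by rwa [← transpose_submatrix, rank_transpose, rank_transpose])
  exact ⟨Xᵀ, by simpa [transpose_mul] using congrArg transpose hX⟩

theorem mul_mul_eq_of_mul_mul_self_eq [Semiring R] [Fintype m] [Fintype k]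
    {C : Matrix m k R} {G : Matrix k m R} (hG : C * G * C = C) {A : Matrix m n R}
    (hA : ∃ X : Matrix k n R, A = C * X) : C * G * A = A := by
  obtain ⟨X, rfl⟩ := hA
  rw [← Matrix.mul_assoc, hG]

theorem mul_mul_eq_of_mul_mul_self_eq_right [Semiring R] [Fintype n] [Fintype k]
    {S : Matrix k n R} {G : Matrix n k R} (hG : S * G * S = S) {A : Matrix m n R}
    (hA : ∃ Y : Matrix m k R, A = Y * S) : A * G * S = A := by
  obtain ⟨Y, rfl⟩ := hA
  rw [Matrix.mul_assoc, Matrix.mul_assoc, ← Matrix.mul_assoc S, hG]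

end Matrix

/-- CUR decomposition of a rank-k matrix: A = C U R with U = C† A R†. -/
theorem CUR_exact {m n k : ℕ}
    (A : Matrix (Fin m) (Fin n) ℂ) (I : Fin k → Fin m) (J : Fin k → Fin n)
    (hrank : A.rank = k)
    (C : Matrix (Fin m) (Fin k) ℂ) (hC : C = A.submatrix id J)
    (R : Matrix (Fin k) (Fin n) ℂ) (hR : R = A.submatrix I id)
    (hCrank : C.rank = k) (hRrank : R.rank = k)
    (Cd : Matrix (Fin k) (Fin m) ℂ) (hCd : IsMoorePenrose C Cd)
    (Rd : Matrix (Fin n) (Fin k) ℂ) (hRd : IsMoorePenrose R Rd) :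
    A = C * (Cd * A * Rd) * R := by
  have hAC : C * Cd * A = A := mul_mul_eq_of_mul_mul_self_eq hCd.1 <| hC ▸
    exists_eq_submatrix_col_mul_of_rank_eq A J (hC ▸ hCrank.trans hrank.symm)
  have hAR : A * Rd * R = A := mul_mul_eq_of_mul_mul_self_eq_right hRd.1 <| hR ▸
    exists_eq_mul_submatrix_row_of_rank_eq A I (hR ▸ hRrank.trans hrank.symm)
  calc A = C * Cd * A * Rd * R := by rw [hAC, hAR]
    _ = C * (Cd * A * Rd) * R := by simp only [Matrix.mul_assoc]
end

section
/- Let A ∈ ℝ^{m×n} with m ≥ n, b ∈ ℝ^m, and let Γ ∈ ℝ^{d×m} satisfy the subspace embedding property (1−ε)‖v‖ ≤ ‖Γv‖ ≤ (1+ε)‖v‖ for every vector v in the column space of [A b], where 0 < ε < 1. If x* minimizes ‖Ax − b‖₂ and x̂ minimizes ‖Γ(Ax − b)‖₂, then ‖A x̂ − b‖₂ ≤ ((1+ε)/(1−ε))·‖A x* − b‖₂. -/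
/-!
Both residuals `A x - b` lie in the embedded subspace (take `c = -1`), so
`(1 - ε) ‖A x̂ - b‖ ≤ ‖Γ (A x̂ - b)‖ ≤ ‖Γ (A x* - b)‖ ≤ (1 + ε) ‖A x* - b‖`,
the middle step being the optimality of `x̂` for the sketched problem.
-/

open Matrix

noncomputable def l2 {m : ℕ} (v : Fin m → ℝ) : ℝ := Real.sqrt (∑ i, v i ^ 2)

theorem le_div_mul_of_distortion {ι : Type*} (f g : ι → ℝ) {ε : ℝ} (hε : ε < 1) {i j : ι}
    (hlower : (1 - ε) * f i ≤ g i) (hmin : g i ≤ g j) (hupper : g j ≤ (1 + ε) * f j) :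
    f i ≤ (1 + ε) / (1 - ε) * f j := by
  rw [div_mul_eq_mul_div, le_div_iff₀ (sub_pos.mpr hε), mul_comm]
  linarith

theorem mulVec_add_neg_one_smul {m n R : Type*} [Fintype n] [Ring R] (A : Matrix m n R)
    (x : n → R) (b : m → R) : A.mulVec x + (-1 : R) • b = A.mulVec x - b := by
  rw [neg_one_smul, ← sub_eq_add_neg]

theorem sketch_and_solve_general {m n d : ℕ}
    (A : Matrix (Fin m) (Fin n) ℝ) (b : Fin m → ℝ)
    (Γ : Matrix (Fin d) (Fin m) ℝ) (ε : ℝ) (hε1 : ε < 1)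
    (hemb : ∀ (x : Fin n → ℝ) (c : ℝ),
      (1 - ε) * l2 (A.mulVec x + c • b) ≤ l2 (Γ.mulVec (A.mulVec x + c • b)) ∧
      l2 (Γ.mulVec (A.mulVec x + c • b)) ≤ (1 + ε) * l2 (A.mulVec x + c • b))
    (xstar xhat : Fin n → ℝ)
    (hxhat : ∀ x, l2 (Γ.mulVec (A.mulVec xhat - b)) ≤ l2 (Γ.mulVec (A.mulVec x - b))) :
    l2 (A.mulVec xhat - b) ≤ ((1 + ε) / (1 - ε)) * l2 (A.mulVec xstar - b) := by
  have hres : ∀ x, (1 - ε) * l2 (A.mulVec x - b) ≤ l2 (Γ.mulVec (A.mulVec x - b)) ∧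
      l2 (Γ.mulVec (A.mulVec x - b)) ≤ (1 + ε) * l2 (A.mulVec x - b) := fun x => by
    simpa only [mulVec_add_neg_one_smul] using hemb x (-1)
  exact le_div_mul_of_distortion (fun x => l2 (A.mulVec x - b))
    (fun x => l2 (Γ.mulVec (A.mulVec x - b))) hε1 (hres xhat).1 (hxhat xstar) (hres xstar).2

/-- Sketch-and-solve guarantee for overdetermined least squares. -/
theorem sketch_and_solve {m n d : ℕ} (hmn : n ≤ m)
    (A : Matrix (Fin m) (Fin n) ℝ) (b : Fin m → ℝ)
    (Γ : Matrix (Fin d) (Fin m) ℝ) (ε : ℝ) (hε0 : 0 < ε) (hε1 : ε < 1)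
    (hemb : ∀ (x : Fin n → ℝ) (c : ℝ),
      (1 - ε) * l2 (A.mulVec x + c • b) ≤ l2 (Γ.mulVec (A.mulVec x + c • b)) ∧
      l2 (Γ.mulVec (A.mulVec x + c • b)) ≤ (1 + ε) * l2 (A.mulVec x + c • b))
    (xstar xhat : Fin n → ℝ)
    (hxstar : ∀ x, l2 (A.mulVec xstar - b) ≤ l2 (A.mulVec x - b))
    (hxhat : ∀ x, l2 (Γ.mulVec (A.mulVec xhat - b)) ≤ l2 (Γ.mulVec (A.mulVec x - b))) :
    l2 (A.mulVec xhat - b) ≤ ((1 + ε) / (1 - ε)) * l2 (A.mulVec xstar - b) :=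
  sketch_and_solve_general A b Γ ε hε1 hemb xstar xhat hxhat
end

section
/- Let Z = A ⊙ B be the Khatri–Rao product of A ∈ ℂ^{I×R} and B ∈ ℂ^{J×R}, and let the row of Z indexed by the pair (i,j) be z_{(i,j)} = A(i,:) ∗ B(j,:). Then the leverage score of row (i,j) of Z is bounded by the product of the leverage scores of row i of A and row j of B: ℓ_{(i,j)}(Z) ≤ ℓ_i(A)·ℓ_j(B). -/
open Matrix

/-- Columnwise Khatri–Rao product. -/
def khatriRao {I J K : ℕ} (A : Matrix (Fin I) (Fin K) ℂ)
    (B : Matrix (Fin J) (Fin K) ℂ) : Matrix (Fin I × Fin J) (Fin K) ℂ :=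
  fun p k => A p.1 k * B p.2 k

/-- Leverage score of the i-th row of M: ℓ_i(M) = m_i* (M*M)⁻¹ m_i. -/
noncomputable def levScore {ι : Type*} [Fintype ι] {R : ℕ}
    (M : Matrix ι (Fin R) ℂ) (i : ι) : ℝ :=
  (star (M i) ⬝ᵥ ((Mᴴ * M)⁻¹).mulVec (M i)).re

/-!
For `G = MᴴM` invertible and `c = G⁻¹ mᵢ` one has `mᵢᴴ v = (Mc)ᴴ (Mv)` and `ℓᵢ(M) = ‖Mc‖²`, so
Cauchy–Schwarz gives `|mᵢᴴ v|² ≤ ℓᵢ(M) ‖Mv‖²` for every `v`; conversely, such a bound with a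
constant `C ≥ 0`, taken at `v = c`, yields `ℓᵢ(M)² ≤ C ℓᵢ(M)`, hence `ℓᵢ(M) ≤ C`.
For `Z = A ⊙ B` one has `z_{(i,j)}ᴴ x = aᵢᴴ (b̄ⱼ ∗ x)`. The bound for `A`, then the bound for `B`
applied to each entry `(A (b̄ⱼ ∗ x))_{i'} = bⱼᴴ (a_{i'} ∗ x)`, give
`|z_{(i,j)}ᴴ x|² ≤ ℓᵢ(A) ℓⱼ(B) Σ_{i'} ‖B (a_{i'} ∗ x)‖² = ℓᵢ(A) ℓⱼ(B) ‖Zx‖²`.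
-/

namespace Matrix

theorem isUnit_of_rank_eq_card {n K : Type*} [Fintype n] [DecidableEq n] [Field K]
    {M : Matrix n n K} (h : M.rank = Fintype.card n) : IsUnit M := by
  rw [← mulVec_surjective_iff_isUnit, ← coe_mulVecLin, ← LinearMap.range_eq_top]
  exact Submodule.eq_top_of_finrank_eq (by rw [Module.finrank_fintype_fun_eq_card, ← h, rank])

open scoped ComplexOrder in
theorem isUnit_conjTranspose_mul_self_of_rank_eq {m : Type*} [Fintype m] {R : ℕ}
    {M : Matrix m (Fin R) ℂ} (h : M.rank = R) : IsUnit (Mᴴ * M) :=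
  isUnit_of_rank_eq_card (by rw [rank_conjTranspose_mul_self, h, Fintype.card_fin])

theorem re_star_dotProduct_self {n : Type*} [Fintype n] (w : n → ℂ) :
    (star w ⬝ᵥ w).re = ∑ k, ‖w k‖ ^ 2 := by
  simp [dotProduct, Complex.re_sum, Complex.conj_mul', ← Complex.ofReal_pow]

theorem norm_star_dotProduct_sq_le {n : Type*} [Fintype n] (x y : n → ℂ) :
    ‖star x ⬝ᵥ y‖ ^ 2 ≤ (∑ k, ‖x k‖ ^ 2) * ∑ k, ‖y k‖ ^ 2 := by
  have h := norm_inner_le_norm (𝕜 := ℂ) (WithLp.toLp 2 x) (WithLp.toLp 2 y)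
  rw [EuclideanSpace.inner_toLp_toLp, dotProduct_comm] at h
  rw [← EuclideanSpace.norm_sq_eq, ← EuclideanSpace.norm_sq_eq, ← mul_pow]
  exact pow_le_pow_left₀ (norm_nonneg _) h 2

end Matrix

section Leverage

variable {m : Type*} [Fintype m] {R : ℕ} {M : Matrix m (Fin R) ℂ}

theorem star_row_dotProduct_eq (hM : IsUnit (Mᴴ * M)) (i : m) (v : Fin R → ℂ) :
    star (M i) ⬝ᵥ v = star (M *ᵥ ((Mᴴ * M)⁻¹ *ᵥ M i)) ⬝ᵥ (M *ᵥ v) := by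
  set c := (Mᴴ * M)⁻¹ *ᵥ M i
  have hc : (Mᴴ * M) *ᵥ c = M i := by
    rw [mulVec_mulVec, mul_nonsing_inv _ ((isUnit_iff_isUnit_det _).mp hM), one_mulVec]
  calc star (M i) ⬝ᵥ v = star ((Mᴴ * M) *ᵥ c) ⬝ᵥ v := by rw [hc]
    _ = star c ⬝ᵥ (Mᴴ *ᵥ M *ᵥ v) := by
      rw [star_mulVec, (isHermitian_conjTranspose_mul_self M).eq, ← dotProduct_mulVec,
        mulVec_mulVec]
    _ = star (M *ᵥ c) ⬝ᵥ (M *ᵥ v) := by rw [star_mulVec M c]; exact dotProduct_mulVec _ _ _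

theorem levScore_eq_sum (hM : IsUnit (Mᴴ * M)) (i : m) :
    levScore M i = ∑ k, ‖(M *ᵥ ((Mᴴ * M)⁻¹ *ᵥ M i)) k‖ ^ 2 := by
  rw [levScore, star_row_dotProduct_eq hM, re_star_dotProduct_self]

theorem levScore_nonneg (hM : IsUnit (Mᴴ * M)) (i : m) : 0 ≤ levScore M i := by
  rw [levScore_eq_sum hM]
  positivity

theorem norm_star_row_dotProduct_sq_le (hM : IsUnit (Mᴴ * M)) (i : m) (v : Fin R → ℂ) :
    ‖star (M i) ⬝ᵥ v‖ ^ 2 ≤ levScore M i * ∑ k, ‖(M *ᵥ v) k‖ ^ 2 := by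
  rw [star_row_dotProduct_eq hM, levScore_eq_sum hM]
  exact norm_star_dotProduct_sq_le _ _

theorem levScore_le_of_forall_norm_sq_le (hM : IsUnit (Mᴴ * M)) (i : m) {c : ℝ} (hc : 0 ≤ c)
    (h : ∀ v, ‖star (M i) ⬝ᵥ v‖ ^ 2 ≤ c * ∑ k, ‖(M *ᵥ v) k‖ ^ 2) : levScore M i ≤ c := by
  obtain hzero | hpos := (levScore_nonneg hM i).eq_or_lt
  · exact hzero ▸ hc
  refine le_of_mul_le_mul_right ?_ hpos
  have hre : levScore M i ≤ ‖star (M i) ⬝ᵥ ((Mᴴ * M)⁻¹ *ᵥ M i)‖ := Complex.re_le_norm _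
  calc levScore M i * levScore M i ≤ ‖star (M i) ⬝ᵥ ((Mᴴ * M)⁻¹ *ᵥ M i)‖ ^ 2 := by
        rw [sq]; exact mul_self_le_mul_self hpos.le hre
    _ ≤ c * levScore M i := by rw [levScore_eq_sum hM]; exact h _

end Leverage

section KhatriRao

variable {I J K : ℕ} {A : Matrix (Fin I) (Fin K) ℂ} {B : Matrix (Fin J) (Fin K) ℂ}

theorem star_khatriRao_row_dotProduct (i : Fin I) (j : Fin J) (x : Fin K → ℂ) :
    star (khatriRao A B (i, j)) ⬝ᵥ x = star (A i) ⬝ᵥ (star (B j) * x) := by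
  simp only [dotProduct, khatriRao, Pi.star_apply, Pi.mul_apply, star_mul']
  exact Finset.sum_congr rfl fun _ _ ↦ by ring

theorem khatriRao_mulVec_apply (x : Fin K → ℂ) (i : Fin I) (j : Fin J) :
    (khatriRao A B *ᵥ x) (i, j) = (B *ᵥ (A i * x)) j := by
  simp only [mulVec, dotProduct, khatriRao, Pi.mul_apply]
  exact Finset.sum_congr rfl fun _ _ ↦ by ring

theorem norm_star_khatriRao_row_dotProduct_sq_le (hA : IsUnit (Aᴴ * A))
    (hB : IsUnit (Bᴴ * B)) (i : Fin I) (j : Fin J) (x : Fin K → ℂ) :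
    ‖star (khatriRao A B (i, j)) ⬝ᵥ x‖ ^ 2 ≤
      levScore A i * levScore B j * ∑ p, ‖(khatriRao A B *ᵥ x) p‖ ^ 2 := by
  have hAv : ∀ i', (A *ᵥ (star (B j) * x)) i' = star (B j) ⬝ᵥ (A i' * x) := fun i' ↦ by
    simp only [mulVec, dotProduct, Pi.star_apply, Pi.mul_apply]
    exact Finset.sum_congr rfl fun _ _ ↦ by ring
  calc ‖star (khatriRao A B (i, j)) ⬝ᵥ x‖ ^ 2
      = ‖star (A i) ⬝ᵥ (star (B j) * x)‖ ^ 2 := by rw [star_khatriRao_row_dotProduct]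
    _ ≤ levScore A i * ∑ i', ‖(A *ᵥ (star (B j) * x)) i'‖ ^ 2 :=
      norm_star_row_dotProduct_sq_le hA i _
    _ ≤ levScore A i * ∑ i', levScore B j * ∑ j', ‖(B *ᵥ (A i' * x)) j'‖ ^ 2 := by
      gcongr with i'
      · exact levScore_nonneg hA i
      rw [hAv]
      exact norm_star_row_dotProduct_sq_le hB j _
    _ = levScore A i * levScore B j * ∑ p, ‖(khatriRao A B *ᵥ x) p‖ ^ 2 := by
      simp only [Fintype.sum_prod_type, khatriRao_mulVec_apply, ← Finset.mul_sum, mul_assoc]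

end KhatriRao

/-- Leverage scores of the Khatri–Rao product are bounded by products of the
    factor leverage scores. -/
theorem khatriRao_leverage_le {I J R : ℕ}
    (A : Matrix (Fin I) (Fin R) ℂ) (B : Matrix (Fin J) (Fin R) ℂ)
    (hA : A.rank = R) (hB : B.rank = R) (hZ : (khatriRao A B).rank = R)
    (i : Fin I) (j : Fin J) :
    levScore (khatriRao A B) (i, j) ≤ levScore A i * levScore B j := by
  have hA' := isUnit_conjTranspose_mul_self_of_rank_eq hA
  have hB' := isUnit_conjTranspose_mul_self_of_rank_eq hB
  exact levScore_le_of_forall_norm_sq_le (isUnit_conjTranspose_mul_self_of_rank_eq hZ) (i, j)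
    (mul_nonneg (levScore_nonneg hA' i) (levScore_nonneg hB' j))
    (norm_star_khatriRao_row_dotProduct_sq_le hA' hB' i j)
end

section
/- Let X ∈ ℝ^{N₁×⋯×N_d} and for each mode j let P_j denote the orthogonal projector A^{(j)}(A^{(j)})* where A^{(j)} ∈ ℝ^{N_j×R_j} consists of the leading R_j left singular vectors of the mode-j unfolding X_{(j)}. Then the HOSVD approximation X̂ = X ×₁ P₁ ⋯ ×_d P_d satisfies ‖X − X̂‖² ≤ Σ_{j=1}^d ‖X − X ×_j P_j‖², and consequently ‖X − X̂‖ ≤ √d · min{‖X − Y‖ : Y has multilinear rank at most (R₁,...,R_d)}. -/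
open Matrix

/-- Mode-j unfolding of a d-mode tensor. -/
def unfold {d : ℕ} {N : Fin d → ℕ} (X : (∀ l, Fin (N l)) → ℝ) (j : Fin d) :
    Matrix (Fin (N j)) (∀ k : {k : Fin d // k ≠ j}, Fin (N k.1)) ℝ :=
  fun a b => X fun l => if h : l = j then Fin.cast (congrArg N h).symm a else b ⟨l, h⟩

/-- Multi-TTM product. -/
def multiTTM {d : ℕ} {N K : Fin d → ℕ} (X : (∀ l, Fin (N l)) → ℝ)
    (U : ∀ l, Matrix (Fin (K l)) (Fin (N l)) ℝ) : (∀ l, Fin (K l)) → ℝ :=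
  fun i => ∑ x : ∀ l, Fin (N l), X x * ∏ l, U l (i l) (x l)

/-- Mode-j product with a square matrix (dimension preserving). -/
def ttmSq {d : ℕ} {N : Fin d → ℕ} (X : (∀ l, Fin (N l)) → ℝ) (j : Fin d)
    (P : Matrix (Fin (N j)) (Fin (N j)) ℝ) : (∀ l, Fin (N l)) → ℝ :=
  fun i => ∑ t : Fin (N j), X (Function.update i j t) * P (i j) t

/-- Tensor Frobenius norm. -/
noncomputable def frobT {d : ℕ} {N : Fin d → ℕ} (X : (∀ l, Fin (N l)) → ℝ) : ℝ :=
  Real.sqrt (∑ i, X i ^ 2)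

/-! The residual `X - P_j X` of an orthogonal projector `P_j` acting on mode `j` is
orthogonal to the range of `P_j`, so for every tensor `Z`
`‖X - P_j Z‖² = ‖X - P_j X‖² + ‖P_j (X - Z)‖² ≤ ‖X - P_j X‖² + ‖X - Z‖²`;
projecting one mode at a time gives the sum bound. If every unfolding of `Y` has rank at
most `R_j`, some rank-`R_j` orthogonal projector `Q_j` on mode `j` fixes `Y`, hence
`‖X - P_j X‖ ≤ ‖X - Q_j X‖ ≤ ‖X - Y‖` by optimality of `P_j` and Pythagoras; summing over
the `d` modes gives the factor `√d`. -/

open Module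

lemma dotProduct_add_self_of_dotProduct_eq_zero {ι : Type*} [Fintype ι] {u v : ι → ℝ}
    (h : u ⬝ᵥ v = 0) : (u + v) ⬝ᵥ (u + v) = u ⬝ᵥ u + v ⬝ᵥ v := by
  rw [add_dotProduct, dotProduct_add, dotProduct_add, dotProduct_comm v u, h]
  ring

theorem Finset.prod_apply_update {ι M : Type*} [Fintype ι] [DecidableEq ι] [CommMonoid M]
    {α : ι → Type*} (f : ∀ i, α i → M) (x : ∀ i, α i) (j : ι) (a : α j) :
    ∏ i, f i (Function.update x j a i) = f j a * ∏ i ∈ univ \ {j}, f i (x i) := by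
  rw [← Finset.prod_update_of_mem (Finset.mem_univ j)]
  exact Finset.prod_congr rfl fun i _ => Function.apply_update f x j a i

lemma Matrix.isStarProjection_mul_transpose {n r R : Type*} [Fintype n] [Fintype r]
    [DecidableEq r] [CommSemiring R] [StarRing R] [TrivialStar R] {A : Matrix n r R}
    (hA : Aᵀ * A = 1) : IsStarProjection (A * Aᵀ) where
  isIdempotentElem := by
    rw [IsIdempotentElem, Matrix.mul_assoc, ← Matrix.mul_assoc Aᵀ, hA, Matrix.one_mul]
  isSelfAdjoint := by
    rw [IsSelfAdjoint, Matrix.star_eq_conjTranspose, conjTranspose_eq_transpose_of_trivial,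
      transpose_mul, transpose_transpose]

lemma IsStarProjection.transpose_eq {n R : Type*} [Fintype n] [Semiring R] [StarRing R]
    [TrivialStar R] {P : Matrix n n R} (hP : IsStarProjection P) : Pᵀ = P := by
  rw [← conjTranspose_eq_transpose_of_trivial]
  exact hP.isSelfAdjoint

lemma Matrix.card_le_of_transpose_mul_self_eq_one {n r K : Type*} [Fintype n] [Fintype r]
    [DecidableEq r] [Field K] {A : Matrix n r K} (hA : Aᵀ * A = 1) :
    Fintype.card r ≤ Fintype.card n :=
  calc Fintype.card r = (Aᵀ * A).rank := by rw [hA, rank_one]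
    _ ≤ A.rank := rank_mul_le_right _ _
    _ ≤ Fintype.card n := A.rank_le_card_height

theorem Submodule.exists_le_finrank_eq {K V : Type*} [DivisionRing K] [AddCommGroup V]
    [Module K V] [FiniteDimensional K V] (W : Submodule K V) {r : ℕ} (hW : finrank K W ≤ r)
    (hr : r ≤ finrank K V) : ∃ W' : Submodule K V, W ≤ W' ∧ finrank K W' = r := by
  induction r with
  | zero => exact ⟨W, le_rfl, by omega⟩
  | succ r ih =>
    rcases hW.eq_or_lt with h | h
    · exact ⟨W, le_rfl, h⟩
    obtain ⟨W', hle, hW'⟩ := ih (by omega) (by omega)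
    obtain ⟨v, hv⟩ := W'.exists_of_finrank_lt (by omega)
    have hv : v ∉ W' := by simpa using hv 1 one_ne_zero
    exact ⟨W' ⊔ Submodule.span K {v}, hle.trans le_sup_left,
      by rw [Submodule.finrank_sup_span_singleton hv, hW']⟩

theorem Matrix.exists_orthonormal_cols_mul_transpose_mul_eq {m : Type*} [Fintype m] {n r : ℕ}
    (M : Matrix (Fin n) m ℝ) (hM : M.rank ≤ r) (hr : r ≤ n) :
    ∃ B : Matrix (Fin n) (Fin r) ℝ, Bᵀ * B = 1 ∧ B * Bᵀ * M = M := by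
  let W₀ : Submodule ℝ (EuclideanSpace ℝ (Fin n)) :=
    (LinearMap.range M.mulVecLin).map (WithLp.linearEquiv 2 ℝ (Fin n → ℝ)).symm.toLinearMap
  have hW₀ : finrank ℝ W₀ ≤ r := by
    rwa [LinearEquiv.finrank_map_eq]
  obtain ⟨W, hle, hW⟩ := W₀.exists_le_finrank_eq hW₀ (by simpa using hr)
  let b : OrthonormalBasis (Fin r) ℝ W := (stdOrthonormalBasis ℝ W).reindex (finCongr hW)
  let B : Matrix (Fin n) (Fin r) ℝ := Matrix.of fun a c => (b c : EuclideanSpace ℝ (Fin n)) a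
  have hBB : ∀ v ∈ W, B *ᵥ (Bᵀ *ᵥ WithLp.ofLp v) = WithLp.ofLp v := by
    intro v hv
    have h := congrArg (fun w : W => WithLp.ofLp (w : EuclideanSpace ℝ (Fin n)))
      (b.sum_repr' ⟨v, hv⟩)
    simp only [Submodule.coe_sum, Submodule.coe_smul, Submodule.coe_inner, WithLp.ofLp_sum,
      WithLp.ofLp_smul] at h
    conv_rhs => rw [← h]
    ext a
    simp [B, mulVec, dotProduct, EuclideanSpace.inner_eq_star_dotProduct, Finset.sum_apply,
      mul_comm]
  refine ⟨B, ?_, ?_⟩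
  · ext c c'
    rw [Matrix.one_apply, ← orthonormal_iff_ite.mp b.orthonormal c c']
    simp [B, Matrix.mul_apply, EuclideanSpace.inner_eq_star_dotProduct, dotProduct, mul_comm]
  · rw [ext_iff_mulVec]
    intro x
    rw [← mulVec_mulVec, ← mulVec_mulVec]
    exact hBB _ (hle ⟨M *ᵥ x, ⟨x, rfl⟩, rfl⟩)

section

variable {d : ℕ} {N : Fin d → ℕ}

lemma frobT_sq (X : (∀ l, Fin (N l)) → ℝ) : frobT X ^ 2 = X ⬝ᵥ X := by
  rw [frobT, Real.sq_sqrt (by positivity)]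
  simp only [dotProduct, sq]

lemma frobT_nonneg (X : (∀ l, Fin (N l)) → ℝ) : 0 ≤ frobT X := Real.sqrt_nonneg _

lemma frobT_add_sq_of_dotProduct_eq_zero {U V : (∀ l, Fin (N l)) → ℝ} (h : U ⬝ᵥ V = 0) :
    frobT (U + V) ^ 2 = frobT U ^ 2 + frobT V ^ 2 := by
  simp only [frobT_sq, dotProduct_add_self_of_dotProduct_eq_zero h]

section ttmSq

variable (X Y : (∀ l, Fin (N l)) → ℝ) (j : Fin d) (P Q : Matrix (Fin (N j)) (Fin (N j)) ℝ)

lemma ttmSq_sub : ttmSq (X - Y) j P = ttmSq X j P - ttmSq Y j P := by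
  funext i
  simp only [ttmSq, Pi.sub_apply, sub_mul, Finset.sum_sub_distrib]

lemma ttmSq_ttmSq : ttmSq (ttmSq X j P) j Q = ttmSq X j (Q * P) := by
  funext i
  simp only [ttmSq, Function.update_idem, Function.update_self, Matrix.mul_apply,
    Finset.sum_mul, Finset.mul_sum]
  rw [Finset.sum_comm]
  exact Finset.sum_congr rfl fun s _ => Finset.sum_congr rfl fun t _ => by ring

lemma ttmSq_dotProduct : ttmSq X j P ⬝ᵥ Y = X ⬝ᵥ ttmSq Y j Pᵀ := by
  -- `(i, t) ↦ (i[j ↦ t], i j)` is an involution exchanging the two double sums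
  let f (p : (∀ l, Fin (N l)) × Fin (N j)) := (Function.update p.1 j p.2, p.1 j)
  have hf : Function.Involutive f := fun p => by simp [f]
  simp only [dotProduct, ttmSq, Finset.sum_mul, Finset.mul_sum, ← Fintype.sum_prod_type']
  refine Fintype.sum_equiv hf.toPerm _ _ fun p => ?_
  simp only [Function.Involutive.coe_toPerm, f, Function.update_idem, Function.update_eq_self,
    Function.update_self, Matrix.transpose_apply]
  ring

end ttmSq

section projection

variable {j : Fin d} {P : Matrix (Fin (N j)) (Fin (N j)) ℝ}

lemma sub_ttmSq_dotProduct_ttmSq_eq_zero (hP : IsStarProjection P)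
    (X Y : (∀ l, Fin (N l)) → ℝ) :
    (X - ttmSq X j P) ⬝ᵥ ttmSq Y j P = 0 := by
  rw [dotProduct_comm, ttmSq_dotProduct, hP.transpose_eq, ttmSq_sub, ttmSq_ttmSq,
    hP.isIdempotentElem.eq, sub_self, dotProduct_zero]

lemma frobT_ttmSq_sq_add_frobT_sub_ttmSq_sq (hP : IsStarProjection P)
    (X : (∀ l, Fin (N l)) → ℝ) :
    frobT (ttmSq X j P) ^ 2 + frobT (X - ttmSq X j P) ^ 2 = frobT X ^ 2 := by
  have h := frobT_add_sq_of_dotProduct_eq_zero (sub_ttmSq_dotProduct_ttmSq_eq_zero hP X X)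
  rw [sub_add_cancel] at h
  rw [h, add_comm]

lemma frobT_ttmSq_sq_le (hP : IsStarProjection P) (X : (∀ l, Fin (N l)) → ℝ) :
    frobT (ttmSq X j P) ^ 2 ≤ frobT X ^ 2 := by
  linarith [frobT_ttmSq_sq_add_frobT_sub_ttmSq_sq hP X, sq_nonneg (frobT (X - ttmSq X j P))]

lemma frobT_sub_ttmSq_sq_le (hP : IsStarProjection P) (X Z : (∀ l, Fin (N l)) → ℝ) :
    frobT (X - ttmSq Z j P) ^ 2 ≤ frobT (X - ttmSq X j P) ^ 2 + frobT (X - Z) ^ 2 := by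
  have hsplit : X - ttmSq Z j P = (X - ttmSq X j P) + ttmSq (X - Z) j P := by
    rw [ttmSq_sub]
    abel
  rw [hsplit, frobT_add_sq_of_dotProduct_eq_zero (sub_ttmSq_dotProduct_ttmSq_eq_zero hP X _)]
  linarith [frobT_ttmSq_sq_le hP (X - Z)]

lemma frobT_sub_ttmSq_le_of_ttmSq_eq_self (hP : IsStarProjection P)
    {X Y : (∀ l, Fin (N l)) → ℝ} (hY : ttmSq Y j P = Y) :
    frobT (X - ttmSq X j P) ≤ frobT (X - Y) := by
  have hsplit : X - ttmSq X j P = (X - Y) - ttmSq (X - Y) j P := by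
    rw [ttmSq_sub, hY]
    abel
  rw [hsplit, ← pow_le_pow_iff_left₀ (frobT_nonneg _) (frobT_nonneg _) two_ne_zero]
  linarith [frobT_ttmSq_sq_add_frobT_sub_ttmSq_sq hP (X - Y),
    sq_nonneg (frobT (ttmSq (X - Y) j P))]

end projection

lemma multiTTM_one (X : (∀ l, Fin (N l)) → ℝ) : multiTTM X (fun _ => 1) = X := by
  funext i
  simp [multiTTM, Matrix.one_apply, Finset.prod_boole, ← funext_iff]

lemma multiTTM_update_mul {K : Fin d → ℕ} (X : (∀ l, Fin (N l)) → ℝ)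
    (U : ∀ l, Matrix (Fin (K l)) (Fin (N l)) ℝ) (j : Fin d)
    (Q : Matrix (Fin (K j)) (Fin (K j)) ℝ) :
    multiTTM X (Function.update U j (Q * U j)) = ttmSq (multiTTM X U) j Q := by
  funext i
  have hL (x : ∀ l, Fin (N l)) :=
    Finset.prod_apply_update (fun l M => M (i l) (x l)) U j (Q * U j)
  have hR (x : ∀ l, Fin (N l)) (t : Fin (K j)) :=
    Finset.prod_apply_update (fun l a => U l a (x l)) i j t
  simp only [multiTTM, ttmSq, Matrix.mul_apply] at hL hR ⊢
  simp only [hL, hR, Finset.sum_mul, Finset.mul_sum]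
  rw [Finset.sum_comm]
  exact Finset.sum_congr rfl fun x _ => Finset.sum_congr rfl fun t _ => by ring

lemma multiTTM_ite_insert (X : (∀ l, Fin (N l)) → ℝ)
    (P : ∀ l, Matrix (Fin (N l)) (Fin (N l)) ℝ) {s : Finset (Fin d)} {j : Fin d}
    (hj : j ∉ s) :
    multiTTM X (fun l => if l ∈ insert j s then P l else 1) =
      ttmSq (multiTTM X fun l => if l ∈ s then P l else 1) j (P j) := by
  rw [← multiTTM_update_mul]
  congr 1
  funext l
  by_cases hl : l = j
  · subst hl
    simp [hj]
  · simp [hl]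

theorem frobT_sub_multiTTM_sq_le_sum (X : (∀ l, Fin (N l)) → ℝ)
    {P : ∀ l, Matrix (Fin (N l)) (Fin (N l)) ℝ} (hP : ∀ l, IsStarProjection (P l)) :
    frobT (X - multiTTM X P) ^ 2 ≤ ∑ j, frobT (X - ttmSq X j (P j)) ^ 2 := by
  classical
  suffices h : ∀ s : Finset (Fin d),
      frobT (X - multiTTM X fun l => if l ∈ s then P l else 1) ^ 2 ≤
        ∑ j ∈ s, frobT (X - ttmSq X j (P j)) ^ 2 by
    simpa using h Finset.univ
  intro s
  induction s using Finset.induction_on with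
  | empty => simp [multiTTM_one, frobT]
  | insert j s hj ih =>
    rw [multiTTM_ite_insert X P hj, Finset.sum_insert hj]
    exact (frobT_sub_ttmSq_sq_le (hP j) X _).trans (add_le_add_right ih _)

lemma unfold_apply_update (Y : (∀ l, Fin (N l)) → ℝ) (j : Fin d) (i : ∀ l, Fin (N l))
    (t : Fin (N j)) : unfold Y j t (fun k => i k.1) = Y (Function.update i j t) := by
  refine congrArg Y (funext fun l => ?_)
  by_cases h : l = j
  · subst h
    simp
  · simp [h]

lemma ttmSq_eq_self_of_mul_unfold_eq {Y : (∀ l, Fin (N l)) → ℝ} {j : Fin d}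
    {Q : Matrix (Fin (N j)) (Fin (N j)) ℝ} (hQ : Q * unfold Y j = unfold Y j) :
    ttmSq Y j Q = Y := by
  funext i
  have h := congrFun (congrFun hQ (i j)) (fun k => i k.1)
  simp only [Matrix.mul_apply, unfold_apply_update, Function.update_eq_self] at h
  simpa only [ttmSq, mul_comm] using h

end

/-- Quasi-optimality of the truncated HOSVD: the projectors P_j = A^{(j)}(A^{(j)})*
    built from the leading R_j left singular vectors of the mode-j unfoldings (here
    characterized by mode-wise optimality among all rank-R_j orthogonal projections)
    satisfy ‖X − X̂‖² ≤ Σ_j ‖X − X ×_j P_j‖², hence ‖X − X̂‖ ≤ √d · min over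
    tensors of multilinear rank at most (R₁,…,R_d). -/
theorem hosvd_quasi_optimal {d : ℕ} {N R : Fin d → ℕ}
    (X : (∀ l, Fin (N l)) → ℝ)
    (A : ∀ j, Matrix (Fin (N j)) (Fin (R j)) ℝ)
    (hA : ∀ j, (A j)ᵀ * A j = 1)
    (hopt : ∀ (j : Fin d) (B : Matrix (Fin (N j)) (Fin (R j)) ℝ), Bᵀ * B = 1 →
      frobT (X - ttmSq X j (A j * (A j)ᵀ)) ≤ frobT (X - ttmSq X j (B * Bᵀ)))
    (Xhat : (∀ l, Fin (N l)) → ℝ)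
    (hXhat : Xhat = multiTTM X fun j => A j * (A j)ᵀ) :
    frobT (X - Xhat) ^ 2 ≤ ∑ j, frobT (X - ttmSq X j (A j * (A j)ᵀ)) ^ 2 ∧
      ∀ Y : (∀ l, Fin (N l)) → ℝ, (∀ j, (unfold Y j).rank ≤ R j) →
        frobT (X - Xhat) ≤ Real.sqrt d * frobT (X - Y) := by
  have hP (j : Fin d) : IsStarProjection (A j * (A j)ᵀ) := isStarProjection_mul_transpose (hA j)
  have hsum : frobT (X - Xhat) ^ 2 ≤ ∑ j, frobT (X - ttmSq X j (A j * (A j)ᵀ)) ^ 2 :=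
    hXhat ▸ frobT_sub_multiTTM_sq_le_sum X hP
  refine ⟨hsum, fun Y hY => ?_⟩
  have hmode (j : Fin d) : frobT (X - ttmSq X j (A j * (A j)ᵀ)) ≤ frobT (X - Y) := by
    obtain ⟨B, hB, hBY⟩ := (unfold Y j).exists_orthonormal_cols_mul_transpose_mul_eq (hY j)
      (by simpa using card_le_of_transpose_mul_self_eq_one (hA j))
    exact (hopt j B hB).trans (frobT_sub_ttmSq_le_of_ttmSq_eq_self
      (isStarProjection_mul_transpose hB) (ttmSq_eq_self_of_mul_unfold_eq hBY))
  have hsq : frobT (X - Xhat) ^ 2 ≤ (Real.sqrt d * frobT (X - Y)) ^ 2 :=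
    calc frobT (X - Xhat) ^ 2 ≤ ∑ j, frobT (X - ttmSq X j (A j * (A j)ᵀ)) ^ 2 := hsum
      _ ≤ ∑ _j : Fin d, frobT (X - Y) ^ 2 :=
        Finset.sum_le_sum fun j _ => pow_le_pow_left₀ (frobT_nonneg _) (hmode j) 2
      _ = (Real.sqrt d * frobT (X - Y)) ^ 2 := by simp [mul_pow]
  exact (pow_le_pow_iff_left₀ (frobT_nonneg _)
    (mul_nonneg (Real.sqrt_nonneg _) (frobT_nonneg _)) two_ne_zero).1 hsq
end
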